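/- arXiv:2511.06867 — 2 statements merged into one kernel-verified Lean document; each statement's English description precedes it below -/
import Mathlib

section
/- For every n ≥ 1 and every unit vector ψ in the n-qubit space (ℂ²)^⊗n, the Groverian entanglement measure E_g(ψ) vanishes if and only if ψ is a product state, i.e., ψ = u₁⊗u₂⊗⋯⊗uₙ for some single-qubit unit vectors u₁,…,uₙ ∈ ℂ². Moreover 0 ≤ E_g(ψ) ≤ 1 for every unit vector ψ. -/
open scoped BigOperators Kronecker ComplexOrder Matrix

namespace SKW

noncomputable section

/-- Bit strings of length `n`: vertices of the `n`-dimensional hypercube /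
    computational basis labels of `n` qubits. -/
abbrev BV (n : ℕ) := Fin n → Bool

/-- Inner product `⟨v|w⟩`, conjugate-linear in the first argument. -/
def ip {α : Type*} [Fintype α] (v w : α → ℂ) : ℂ :=
  ∑ i, (starRingEnd ℂ) (v i) * w i

/-- Squared `ℓ²`-norm of a vector of amplitudes. -/
def normSq {α : Type*} [Fintype α] (v : α → ℂ) : ℝ :=
  ∑ i, norm (v i) ^ 2

/-- Flip the `d`-th bit of `x` (i.e. `x ⊕ e_d`). -/
def flipBit {n : ℕ} (x : BV n) (d : Fin n) : BV n := Function.update x d (!x d)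

/-- The shift operator `S = Σ_{d,x} |d, x ⊕ e_d⟩⟨d, x|` on `ℂ^n ⊗ ℂ^N`. -/
def shift (n : ℕ) : Matrix (Fin n × BV n) (Fin n × BV n) ℂ :=
  Matrix.of fun p q => if p.1 = q.1 ∧ p.2 = flipBit q.2 q.1 then 1 else 0

/-- The coin-space equal superposition `|S^c⟩ = (1/√n) Σ_d |d⟩`. -/
def sc (n : ℕ) : Fin n → ℂ := fun _ => ((1 / Real.sqrt n : ℝ) : ℂ)

/-- The node-space equal superposition `|η⟩ = (1/√N) Σ_x |x⟩`, `N = 2^n`. -/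
def eta (n : ℕ) : BV n → ℂ := fun _ => ((1 / Real.sqrt ((2 : ℝ) ^ n) : ℝ) : ℂ)

/-- Grover coin `G = 2|S^c⟩⟨S^c| − I`. -/
def grover (n : ℕ) : Matrix (Fin n) (Fin n) ℂ :=
  (2 : ℂ) • Matrix.vecMulVec (sc n) (fun d => (starRingEnd ℂ) (sc n d)) - 1

/-- Rank-one projector `|a⟩⟨a|` onto a basis vector. -/
def projV {α : Type*} [Fintype α] [DecidableEq α] (a : α) : Matrix α α ℂ :=
  Matrix.of fun x y => if x = a ∧ y = a then 1 else 0

/-- Perturbed coin `C = G ⊗ I + (−I − G) ⊗ |x_tg⟩⟨x_tg|`. -/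
def coin (n : ℕ) (t : BV n) : Matrix (Fin n × BV n) (Fin n × BV n) ℂ :=
  grover n ⊗ₖ (1 : Matrix (BV n) (BV n) ℂ) +
    (-(1 : Matrix (Fin n) (Fin n) ℂ) - grover n) ⊗ₖ projV t

/-- Perturbed evolution operator `V = S·C`. -/
def walkOp (n : ℕ) (t : BV n) : Matrix (Fin n × BV n) (Fin n × BV n) ℂ :=
  shift n * coin n t

/-- Number of iterations `τ = ⌊(π/2)√(2^{n−1})⌋`. -/
def tau (n : ℕ) : ℕ := ⌊(Real.pi / 2) * Real.sqrt ((2 : ℝ) ^ (n - 1))⌋₊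

/-- Tensor product of a coin vector with a node vector. -/
def tensorCN {n : ℕ} (c : Fin n → ℂ) (v : BV n → ℂ) : Fin n × BV n → ℂ :=
  fun p => c p.1 * v p.2

/-- Computational basis vector `|a⟩`. -/
def basisVec {α : Type*} [DecidableEq α] (a : α) : α → ℂ :=
  fun x => if x = a then 1 else 0

/-- Target state `|Γ⟩ = |S^c⟩ ⊗ |x_tg⟩`. -/
def gammaSt (n : ℕ) (t : BV n) : Fin n × BV n → ℂ :=
  tensorCN (sc n) (basisVec t)

/-- Average success probability of the SKW-1 algorithm on initial node state `ψ`. -/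
def P1 (n : ℕ) (ψ : BV n → ℂ) : ℝ :=
  (1 / (2 : ℝ) ^ n) * ∑ t : BV n,
    norm (ip (gammaSt n t) ((walkOp n t ^ tau n).mulVec (tensorCN (sc n) ψ))) ^ 2

/-- Coherence fraction `f_c(ψ) = |⟨η|ψ⟩|²`. -/
def fc (n : ℕ) (ψ : BV n → ℂ) : ℝ := norm (ip (eta n) ψ) ^ 2

/-- Kronecker product of `n` single-qubit matrices, as a matrix on `(ℂ²)^⊗n`. -/
def kronN {n : ℕ} (U : Fin n → Matrix Bool Bool ℂ) : Matrix (BV n) (BV n) ℂ :=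
  Matrix.of fun x y => ∏ j, U j (x j) (y j)

/-- Tensor product of `n` single-qubit vectors. -/
def tensorVec {n : ℕ} (u : Fin n → Bool → ℂ) : BV n → ℂ :=
  fun x => ∏ j, u j (x j)

/-- Density matrix: positive semidefinite with trace one. -/
def IsDensity {α : Type*} [Fintype α] [DecidableEq α] (ρ : Matrix α α ℂ) : Prop :=
  ρ.PosSemidef ∧ ρ.trace = 1

/-- Separable state: finite convex combination of tensor products of
single-qubit density matrices. -/
def IsSep {n : ℕ} (σ : Matrix (BV n) (BV n) ℂ) : Prop :=
  ∃ (m : ℕ) (p : Fin m → ℝ) (ρ : Fin m → Fin n → Matrix Bool Bool ℂ),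
    (∀ i, 0 ≤ p i) ∧ ∑ i, p i = 1 ∧ (∀ i j, IsDensity (ρ i j)) ∧
      σ = ∑ i, (p i : ℂ) • kronN (ρ i)

/-- Fidelity `⟨ψ|ρ|ψ⟩` between a pure state and a density matrix. -/
def fid {α : Type*} [Fintype α] (ψ : α → ℂ) (ρ : Matrix α α ℂ) : ℝ :=
  (ip ψ (ρ.mulVec ψ)).re

/-- Groverian entanglement measure `E_g(ψ) = min_{σ separable} √(1 − ⟨ψ|σ|ψ⟩)`. -/
def Eg {n : ℕ} (ψ : BV n → ℂ) : ℝ :=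
  sInf {r : ℝ | ∃ σ, IsSep σ ∧ r = Real.sqrt (1 - fid ψ σ)}

/-- Incoherent state: density matrix diagonal in the computational basis. -/
def IsIncoherent {α : Type*} [Fintype α] [DecidableEq α] (δ : Matrix α α ℂ) : Prop :=
  IsDensity δ ∧ ∀ x y, x ≠ y → δ x y = 0

/-- Fidelity-based coherence measure `C_f(ψ) = min_{δ incoherent} √(1 − ⟨ψ|δ|ψ⟩)`. -/
def Cf {α : Type*} [Fintype α] [DecidableEq α] (ψ : α → ℂ) : ℝ :=
  sInf {r : ℝ | ∃ δ, IsIncoherent δ ∧ r = Real.sqrt (1 - fid ψ δ)}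

/-- Pauli X. -/
def PX : Matrix Bool Bool ℂ := Matrix.of fun a b => if a = b then 0 else 1

/-- Pauli Y. -/
def PY : Matrix Bool Bool ℂ :=
  Matrix.of fun a b => if a = b then 0 else if a then Complex.I else -Complex.I

/-- Pauli Z. -/
def PZ : Matrix Bool Bool ℂ :=
  Matrix.of fun a b => if a = b then (if a then -1 else 1) else 0

/-- The 2×2 Hadamard matrix. -/
def Had : Matrix Bool Bool ℂ :=
  Matrix.of fun a b => ((1 / Real.sqrt 2 : ℝ) : ℂ) * (if a && b then -1 else 1)

/-- `H^{⊗n}`. -/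
def HadN (n : ℕ) : Matrix (BV n) (BV n) ℂ := kronN fun _ => Had

/-- Membership in `{X, Y, Z}`. -/
def IsPauliXYZ (V : Matrix Bool Bool ℂ) : Prop := V = PX ∨ V = PY ∨ V = PZ

/-- Maximal average success probability of SKW-2: optimize over a layer of
single-qubit unitaries applied to the node register. -/
def P2 (n : ℕ) (ψ : BV n → ℂ) : ℝ :=
  sSup {r : ℝ | ∃ U : Fin n → Matrix Bool Bool ℂ,
    (∀ j, U j ∈ Matrix.unitaryGroup Bool ℂ) ∧ r = P1 n ((kronN U).mulVec ψ)}

/-- Maximal average success probability of SKW-3: a layer of Pauli gates from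
`{X,Y,Z}` followed by `H^{⊗n}`. -/
def P3 (n : ℕ) (ψ : BV n → ℂ) : ℝ :=
  sSup {r : ℝ | ∃ V : Fin n → Matrix Bool Bool ℂ,
    (∀ j, IsPauliXYZ (V j)) ∧ r = P1 n ((HadN n * kronN V).mulVec ψ)}

/-- Even Hamming-weight predicate. -/
def evenPar {m : ℕ} (x : BV m) : Prop :=
  Even (Finset.univ.filter (fun j => x j = true)).card

instance {m : ℕ} (x : BV m) : Decidable (evenPar x) := by
  unfold evenPar; infer_instance

/-- Equal superposition over even-parity vertices. -/
def etaE (m : ℕ) : BV m → ℂ :=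
  fun x => if evenPar x then ((1 / Real.sqrt ((2 : ℝ) ^ m / 2) : ℝ) : ℂ) else 0

/-- Projection onto even-parity vertices. -/
def projE {m : ℕ} (ψ : BV m → ℂ) : BV m → ℂ :=
  fun x => if evenPar x then ψ x else 0

/-- Optimized perturbed evolution `V_opt = S(G ⊗ I)S·C`. -/
def walkOptOp (m : ℕ) (t : BV m) : Matrix (Fin m × BV m) (Fin m × BV m) ℂ :=
  shift m * (grover m ⊗ₖ (1 : Matrix (BV m) (BV m) ℂ)) * shift m * coin m t

/-- `τ_opt = ⌊(π/(2√2))√N⌋`. -/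
def tauOpt (m : ℕ) : ℕ :=
  ⌊(Real.pi / (2 * Real.sqrt 2)) * Real.sqrt ((2 : ℝ) ^ m)⌋₊

/-- Average success probability of the optimized OSKW-1 algorithm. -/
def P1opt (m : ℕ) (ψ : BV m → ℂ) : ℝ :=
  (1 / ((2 : ℝ) ^ m / 2)) * ∑ t ∈ Finset.univ.filter (fun t : BV m => evenPar t),
    norm (ip (gammaSt m t)
      ((walkOptOp m t ^ tauOpt m).mulVec (tensorCN (sc m) (projE ψ)))) ^ 2

/-- Coherence fraction with respect to the even-parity equal superposition. -/
def fcE (m : ℕ) (ψ : BV m → ℂ) : ℝ := norm (ip (etaE m) ψ) ^ 2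

/-- Parity bit of a bit string. -/
def parityBit {n : ℕ} (x : BV n) : Bool :=
  Nat.bodd (Finset.univ.filter (fun j => x j = true)).card

/-- Embed an `n`-qubit node state into the even-parity subspace of the
`(n+1)`-dimensional hypercube by appending a parity bit. -/
def embedEven {n : ℕ} (ψ : BV n → ℂ) : BV (n + 1) → ℂ :=
  fun x =>
    if x (Fin.last n) = parityBit (fun j : Fin n => x j.castSucc)
    then ψ (fun j : Fin n => x j.castSucc) else 0

/-- Maximal average success probability of OSKW-2. -/
def P2opt (n : ℕ) (ψ : BV n → ℂ) : ℝ :=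
  sSup {r : ℝ | ∃ U : Fin n → Matrix Bool Bool ℂ,
    (∀ j, U j ∈ Matrix.unitaryGroup Bool ℂ) ∧
      r = P1opt (n + 1) (embedEven ((kronN U).mulVec ψ))}

/-- Maximal average success probability of OSKW-3. -/
def P3opt (n : ℕ) (ψ : BV n → ℂ) : ℝ :=
  sSup {r : ℝ | ∃ V : Fin n → Matrix Bool Bool ℂ,
    (∀ j, IsPauliXYZ (V j)) ∧
      r = P1opt (n + 1) (embedEven ((HadN n * kronN V).mulVec ψ))}

/-- Input density matrix `ρ_in = |S^c⟩⟨S^c| ⊗ ρ`. -/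
def rhoIn (n : ℕ) (ρ : Matrix (BV n) (BV n) ℂ) :
    Matrix (Fin n × BV n) (Fin n × BV n) ℂ :=
  Matrix.vecMulVec (sc n) (fun d => (starRingEnd ℂ) (sc n d)) ⊗ₖ ρ

/-- Average success probability of SKW-1 with a mixed initial node state. -/
def P1mix (n : ℕ) (ρ : Matrix (BV n) (BV n) ℂ) : ℝ :=
  (1 / (2 : ℝ) ^ n) * ∑ t : BV n,
    ((walkOp n t ^ tau n * rhoIn n ρ * (walkOp n t ^ tau n).conjTranspose *
      Matrix.vecMulVec (gammaSt n t) (fun p => (starRingEnd ℂ) (gammaSt n t p))).trace).re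

/-- Coherence fraction `f_c(ρ) = ⟨η|ρ|η⟩` of a mixed state. -/
def fcMix (n : ℕ) (ρ : Matrix (BV n) (BV n) ℂ) : ℝ := fid (eta n) ρ

/-- The all-zeros basis state `|0ⁿ⟩`. -/
def zeroVec (n : ℕ) : BV n → ℂ := basisVec (fun _ => false)

/-- The single-qubit state `|+⟩`. -/
def plusVec : Bool → ℂ := fun _ => ((1 / Real.sqrt 2 : ℝ) : ℂ)

/-- Product (unentangled) pure state. -/
def IsProductVec {n : ℕ} (ψ : BV n → ℂ) : Prop :=
  ∃ u : Fin n → Bool → ℂ, (∀ j, normSq (u j) = 1) ∧ ψ = tensorVec u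

/-!
Fidelity `σ ↦ ⟨ψ|σ|ψ⟩` is linear, and writing each single-qubit density matrix as a sum of
rank-one positive terms exhibits every separable state as a convex combination of projectors
onto product vectors. So the largest fidelity of `ψ` with a separable state is the largest overlap
`|⟨u₁ ⊗ ⋯ ⊗ uₙ|ψ⟩|²` over unit vectors `uⱼ`, attained on the compact product of spheres, and
`E_g(ψ) = √(1 - max |⟨φ|ψ⟩|²)`. It vanishes iff `|⟨φ|ψ⟩| = 1` for a unit product vector `φ`,
i.e. by the equality case of Cauchy–Schwarz iff `ψ = c φ` with `|c| = 1`, and the phase `c` can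
be absorbed into one factor of `φ`.
-/

open Matrix

section FiniteDim

variable {α : Type*} [Fintype α]

lemma ip_eq_dotProduct (v w : α → ℂ) : ip v w = star v ⬝ᵥ w := rfl

lemma ip_eq_inner (v w : α → ℂ) :
    ip v w = inner ℂ (WithLp.toLp 2 v : EuclideanSpace ℂ α) (WithLp.toLp 2 w) := by
  simp [ip, PiLp.inner_apply, mul_comm]

lemma normSq_eq_norm_sq (v : α → ℂ) :
    normSq v = ‖(WithLp.toLp 2 v : EuclideanSpace ℂ α)‖ ^ 2 := by
  simp [normSq, EuclideanSpace.norm_sq_eq]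

lemma ip_self (v : α → ℂ) : ip v v = normSq v := by
  rw [ip_eq_inner, normSq_eq_norm_sq, inner_self_eq_norm_sq_to_K]
  push_cast
  rfl

lemma normSq_eq_one_iff (v : α → ℂ) :
    normSq v = 1 ↔ ‖(WithLp.toLp 2 v : EuclideanSpace ℂ α)‖ = 1 := by
  rw [normSq_eq_norm_sq, pow_eq_one_iff_of_nonneg (norm_nonneg _) two_ne_zero]

lemma ip_smul_left (c : ℂ) (v w : α → ℂ) : ip (c • v) w = starRingEnd ℂ c * ip v w := by
  rw [ip_eq_inner, ip_eq_inner, WithLp.toLp_smul, inner_smul_left]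

lemma ip_smul_right (c : ℂ) (v w : α → ℂ) : ip v (c • w) = c * ip v w := by
  rw [ip_eq_inner, ip_eq_inner, WithLp.toLp_smul, inner_smul_right]

lemma conj_ip (v w : α → ℂ) : starRingEnd ℂ (ip v w) = ip w v := by
  rw [ip_eq_inner, ip_eq_inner, inner_conj_symm]

lemma normSq_smul (c : ℂ) (v : α → ℂ) : normSq (c • v) = ‖c‖ ^ 2 * normSq v := by
  simp [normSq, mul_pow, Finset.mul_sum]

lemma isCompact_setOf_normSq_eq_one : IsCompact {v : α → ℂ | normSq v = 1} := by
  have : {v : α → ℂ | normSq v = 1} =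
      WithLp.ofLp '' Metric.sphere (0 : EuclideanSpace ℂ α) 1 := by
    ext v
    constructor
    · intro hv
      exact ⟨WithLp.toLp 2 v, mem_sphere_zero_iff_norm.2 ((normSq_eq_one_iff v).1 hv), rfl⟩
    · rintro ⟨x, hx, rfl⟩
      exact (normSq_eq_one_iff _).2 (mem_sphere_zero_iff_norm.1 hx)
  rw [this]
  exact (isCompact_sphere 0 1).image (PiLp.continuous_ofLp 2 _)

lemma exists_eq_smul_of_one_le_norm_ip {φ ψ : α → ℂ} (hφ : normSq φ = 1) (hψ : normSq ψ = 1)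
    (h : 1 ≤ ‖ip φ ψ‖) : ∃ c : ℂ, ‖c‖ = 1 ∧ ψ = c • φ := by
  rw [normSq_eq_one_iff] at hφ hψ
  rw [ip_eq_inner] at h
  set x : EuclideanSpace ℂ α := WithLp.toLp 2 φ
  set y : EuclideanSpace ℂ α := WithLp.toLp 2 ψ
  have heq : ‖inner ℂ x y‖ = ‖x‖ * ‖y‖ :=
    le_antisymm (norm_inner_le_norm x y) (by rwa [hφ, hψ, one_mul])
  have hx : x ≠ 0 := norm_ne_zero_iff.1 (by rw [hφ]; exact one_ne_zero)
  have hy : y ≠ 0 := norm_ne_zero_iff.1 (by rw [hψ]; exact one_ne_zero)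
  obtain ⟨c, -, hc⟩ := (norm_inner_eq_norm_iff hx hy).1 heq
  refine ⟨c, ?_, by simpa using congrArg WithLp.ofLp hc⟩
  simpa [hφ, hψ, norm_smul] using (congrArg norm hc).symm

lemma trace_vecMulVec_self_star (v : α → ℂ) : (vecMulVec v (star v)).trace = normSq v := by
  rw [trace_vecMulVec, dotProduct_comm, ← ip_self]
  rfl

lemma fid_vecMulVec_self_star (ψ v : α → ℂ) : fid ψ (vecMulVec v (star v)) = ‖ip v ψ‖ ^ 2 := by
  have hmul : vecMulVec v (star v) *ᵥ ψ = ip v ψ • v := by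
    ext i
    simp [vecMulVec_mulVec, ip, dotProduct, mul_comm]
  rw [fid, hmul, ip_smul_right, ← conj_ip v ψ, Complex.mul_conj', ← Complex.ofReal_pow,
    Complex.ofReal_re]

lemma fid_sum {ι : Type*} (s : Finset ι) (ψ : α → ℂ) (M : ι → Matrix α α ℂ) :
    fid ψ (∑ i ∈ s, M i) = ∑ i ∈ s, fid ψ (M i) := by
  rw [fid, sum_mulVec, ip_eq_dotProduct, dotProduct_sum, Complex.re_sum]
  rfl

lemma fid_ofReal_smul (c : ℝ) (ψ : α → ℂ) (M : Matrix α α ℂ) :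
    fid ψ ((c : ℂ) • M) = c * fid ψ M := by
  rw [fid, fid, smul_mulVec, ip_smul_right, Complex.re_ofReal_mul]

variable [DecidableEq α]

lemma isDensity_vecMulVec_self_star {v : α → ℂ} (hv : normSq v = 1) :
    IsDensity (vecMulVec v (star v)) :=
  ⟨posSemidef_vecMulVec_self_star v, by rw [trace_vecMulVec_self_star, hv, Complex.ofReal_one]⟩

end FiniteDim

section Qubits

variable {n : ℕ}

lemma tensorVec_smul (c : Fin n → ℂ) (u : Fin n → Bool → ℂ) :
    tensorVec (fun j => c j • u j) = (∏ j, c j) • tensorVec u := by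
  funext x
  simp [tensorVec, Finset.prod_mul_distrib]

lemma normSq_tensorVec (u : Fin n → Bool → ℂ) : normSq (tensorVec u) = ∏ j, normSq (u j) := by
  simp only [normSq, tensorVec, norm_prod, ← Finset.prod_pow]
  exact (Fintype.prod_sum fun j b => ‖u j b‖ ^ 2).symm

lemma kronN_vecMulVec (u : Fin n → Bool → ℂ) :
    kronN (fun j => vecMulVec (u j) (star (u j))) =
      vecMulVec (tensorVec u) (star (tensorVec u)) := by
  ext x y
  simp [kronN, tensorVec, vecMulVec_apply, Finset.prod_mul_distrib]

lemma kronN_sum {κ : Fin n → Type*} [∀ j, Fintype (κ j)] (M : ∀ j, κ j → Matrix Bool Bool ℂ) :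
    kronN (fun j => ∑ k, M j k) = ∑ g : ∀ j, κ j, kronN (fun j => M j (g j)) := by
  ext x y
  simp [kronN, Matrix.sum_apply, Fintype.prod_sum]

lemma isSep_vecMulVec_tensorVec {u : Fin n → Bool → ℂ} (hu : ∀ j, normSq (u j) = 1) :
    IsSep (vecMulVec (tensorVec u) (star (tensorVec u))) :=
  ⟨1, fun _ => 1, fun _ j => vecMulVec (u j) (star (u j)), fun _ => zero_le_one, by simp,
    fun _ j => isDensity_vecMulVec_self_star (hu j), by simp [kronN_vecMulVec]⟩

lemma isProductVec_smul_tensorVec (hn : 0 < n) {u : Fin n → Bool → ℂ}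
    (hu : ∀ j, normSq (u j) = 1) {c : ℂ} (hc : ‖c‖ = 1) : IsProductVec (c • tensorVec u) := by
  set i : Fin n := ⟨0, hn⟩
  refine ⟨fun j => (Pi.mulSingle i c : Fin n → ℂ) j • u j, fun j => ?_, ?_⟩
  · rw [normSq_smul, hu j, mul_one]
    by_cases hj : j = i <;> simp [hj, hc]
  · rw [tensorVec_smul, Finset.prod_pi_mulSingle', if_pos (Finset.mem_univ i)]

lemma exists_isMaxOn_norm_ip_tensorVec_sq (ψ : BV n → ℂ) :
    ∃ u ∈ {u : Fin n → Bool → ℂ | ∀ j, normSq (u j) = 1},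
      IsMaxOn (fun w => ‖ip (tensorVec w) ψ‖ ^ 2) {u | ∀ j, normSq (u j) = 1} u := by
  have hcompact : IsCompact {u : Fin n → Bool → ℂ | ∀ j, normSq (u j) = 1} := by
    simpa [Set.pi, Set.mem_univ, true_implies] using
      isCompact_univ_pi fun _ : Fin n => isCompact_setOf_normSq_eq_one (α := Bool)
  refine hcompact.exists_isMaxOn ⟨fun _ => Pi.single true 1, fun _ => by simp [normSq]⟩ ?_
  unfold ip tensorVec
  fun_prop

end Qubits

section Overlap

variable {n : ℕ} {ψ : BV n → ℂ} {F : ℝ}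

lemma norm_ip_tensorVec_sq_le_mul_prod
    (hF : ∀ w : Fin n → Bool → ℂ, (∀ j, normSq (w j) = 1) → ‖ip (tensorVec w) ψ‖ ^ 2 ≤ F)
    (w : Fin n → Bool → ℂ) : ‖ip (tensorVec w) ψ‖ ^ 2 ≤ F * ∏ j, normSq (w j) := by
  by_cases hw : ∃ j, w j = 0
  · obtain ⟨j, hj⟩ := hw
    have hzero : tensorVec w = 0 := funext fun x =>
      Finset.prod_eq_zero (Finset.mem_univ j) (by simp [hj])
    have hnormSq : normSq (w j) = 0 := by simp [normSq, hj]
    rw [hzero, Finset.prod_eq_zero (f := fun j => normSq (w j)) (Finset.mem_univ j) hnormSq]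
    simp [ip]
  simp only [not_exists] at hw
  set r : Fin n → ℝ := fun j => ‖(WithLp.toLp 2 (w j) : EuclideanSpace ℂ Bool)‖
  have hr : ∀ j, r j ≠ 0 := fun j => by simpa [r] using hw j
  set u : Fin n → Bool → ℂ := fun j => (r j : ℂ)⁻¹ • w j
  have hu : ∀ j, normSq (u j) = 1 := fun j => by
    rw [normSq_smul, normSq_eq_norm_sq, norm_inv, Complex.norm_real,
      Real.norm_of_nonneg (norm_nonneg _), inv_pow]
    exact inv_mul_cancel₀ (pow_ne_zero 2 (hr j))
  have hwu : tensorVec w = (∏ j, (r j : ℂ)) • tensorVec u := by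
    rw [← tensorVec_smul]
    congr 1
    funext j
    simp [u, smul_smul, hr j]
  calc ‖ip (tensorVec w) ψ‖ ^ 2 = (∏ j, normSq (w j)) * ‖ip (tensorVec u) ψ‖ ^ 2 := by
        simp [hwu, ip_smul_left, normSq_eq_norm_sq, mul_pow, Finset.prod_pow, r]
    _ ≤ (∏ j, normSq (w j)) * F :=
        mul_le_mul_of_nonneg_left (hF u hu) (Finset.prod_nonneg fun j _ => by
          rw [normSq_eq_norm_sq]; positivity)
    _ = F * ∏ j, normSq (w j) := mul_comm _ _

lemma fid_kronN_le
    (hF : ∀ w : Fin n → Bool → ℂ, ‖ip (tensorVec w) ψ‖ ^ 2 ≤ F * ∏ j, normSq (w j))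
    {ρ : Fin n → Matrix Bool Bool ℂ} (hρ : ∀ j, IsDensity (ρ j)) : fid ψ (kronN ρ) ≤ F := by
  choose m v hv using fun j => posSemidef_iff_eq_sum_vecMulVec.1 (hρ j).1
  have htrace : ∀ j, ∑ k, normSq (v j k) = 1 := fun j => by
    have := (hρ j).2
    rw [hv j, trace_sum] at this
    simp only [trace_vecMulVec_self_star] at this
    exact_mod_cast this
  calc fid ψ (kronN ρ)
      = ∑ g : ∀ j, Fin (m j), ‖ip (tensorVec fun j => v j (g j)) ψ‖ ^ 2 := by
        rw [funext hv, kronN_sum, fid_sum]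
        simp only [kronN_vecMulVec, fid_vecMulVec_self_star]
    _ ≤ ∑ g : ∀ j, Fin (m j), F * ∏ j, normSq (v j (g j)) :=
        Finset.sum_le_sum fun g _ => hF _
    _ = F := by
        rw [← Finset.mul_sum, ← Fintype.prod_sum fun j k => normSq (v j k)]
        simp [htrace]

lemma fid_le_of_isSep
    (hF : ∀ w : Fin n → Bool → ℂ, ‖ip (tensorVec w) ψ‖ ^ 2 ≤ F * ∏ j, normSq (w j))
    {σ : Matrix (BV n) (BV n) ℂ} (hσ : IsSep σ) : fid ψ σ ≤ F := by
  obtain ⟨m, p, ρ, hp, hp1, hρ, rfl⟩ := hσ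
  calc fid ψ (∑ i, (p i : ℂ) • kronN (ρ i))
      = ∑ i, p i * fid ψ (kronN (ρ i)) := by simp only [fid_sum, fid_ofReal_smul]
    _ ≤ ∑ i, p i * F :=
        Finset.sum_le_sum fun i _ => mul_le_mul_of_nonneg_left (fid_kronN_le hF (hρ i)) (hp i)
    _ = F := by rw [← Finset.sum_mul, hp1, one_mul]

lemma Eg_eq_sqrt_of_isMaxOn {u : Fin n → Bool → ℂ} (hu : ∀ j, normSq (u j) = 1)
    (hmax : IsMaxOn (fun w => ‖ip (tensorVec w) ψ‖ ^ 2) {u | ∀ j, normSq (u j) = 1} u) :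
    Eg ψ = √(1 - ‖ip (tensorVec u) ψ‖ ^ 2) := by
  refine IsLeast.csInf_eq ⟨⟨_, isSep_vecMulVec_tensorVec hu, by rw [fid_vecMulVec_self_star]⟩, ?_⟩
  rintro r ⟨σ, hσ, rfl⟩
  have hF := norm_ip_tensorVec_sq_le_mul_prod (F := ‖ip (tensorVec u) ψ‖ ^ 2) fun w hw => hmax hw
  exact Real.sqrt_le_sqrt (by linarith [fid_le_of_isSep hF hσ])

end Overlap

/-- The Groverian entanglement of a unit vector vanishes iff the vector is a
product state, and it always lies in `[0, 1]`. -/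
theorem groverian_zero_iff_product :
    ∀ n : ℕ, 1 ≤ n → ∀ ψ : BV n → ℂ, normSq ψ = 1 →
      (Eg ψ = 0 ↔ ∃ u : Fin n → Bool → ℂ,
        (∀ j, normSq (u j) = 1) ∧ ψ = tensorVec u) ∧
      0 ≤ Eg ψ ∧ Eg ψ ≤ 1 := by
  intro n hn ψ hψ
  obtain ⟨u, hu, hmax⟩ := exists_isMaxOn_norm_ip_tensorVec_sq ψ
  have hEg := Eg_eq_sqrt_of_isMaxOn hu hmax
  refine ⟨⟨fun h0 => ?_, ?_⟩, hEg ▸ Real.sqrt_nonneg _, ?_⟩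
  · rw [hEg, Real.sqrt_eq_zero', sub_nonpos, one_le_sq_iff_one_le_abs, abs_norm] at h0
    have hunit : normSq (tensorVec u) = 1 := by
      rw [normSq_tensorVec]
      exact Finset.prod_eq_one fun j _ => hu j
    obtain ⟨c, hc, rfl⟩ := exists_eq_smul_of_one_le_norm_ip hunit hψ h0
    exact isProductVec_smul_tensorVec hn hu hc
  · rintro ⟨w, hw, rfl⟩
    rw [hEg, Real.sqrt_eq_zero', sub_nonpos]
    simpa [ip_self, hψ] using hmax hw
  · rw [hEg, Real.sqrt_le_one]
    linarith [sq_nonneg ‖ip (tensorVec u) ψ‖]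

end

end SKW
end

section
/- For every n ≥ 1 and every unit vector ψ in the n-qubit space (ℂ²)^⊗n, the maximum of |⟨0ⁿ|(V₁⊗V₂⊗⋯⊗Vₙ)|ψ⟩|² over all choices of V₁,…,Vₙ with each V_j a Pauli matrix in {X, Y, Z} equals the maximum of |⟨i|ψ⟩|² over all computational basis states |i⟩, which in turn equals 1 − C_f(ψ)². -/
open scoped BigOperators Kronecker ComplexOrder Matrix

namespace SKW

noncomputable section

/-! Every Pauli matrix in `{X, Y, Z}` is monomial: its row `0` has a single nonzero entry, of
modulus one (in column `1` for `X`, `Y` and column `0` for `Z`). So `⟨0ⁿ|V₁⊗⋯⊗Vₙ|ψ⟩` is a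
unimodular multiple of one amplitude `ψ c`, and every `c` arises (put `X` on the `1`-bits of `c`
and `Z` elsewhere). For a diagonal density matrix `δ`, `⟨ψ|δ|ψ⟩` is a convex combination of the
`|ψ x|²`, maximised by the projector onto a largest amplitude. -/

section Coherence

variable {α : Type*} [Fintype α]

lemma ip_basisVec_left [DecidableEq α] (a : α) (w : α → ℂ) : ip (basisVec a) w = w a := by
  simp [ip, basisVec]

lemma fid_eq_sum_of_offDiag_eq_zero {δ : Matrix α α ℂ} (hδ : ∀ x y, x ≠ y → δ x y = 0)
    (ψ : α → ℂ) : fid ψ δ = ∑ x, (δ x x).re * ‖ψ x‖ ^ 2 := by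
  have hmulVec : δ.mulVec ψ = fun x => δ x x * ψ x := by
    funext x
    rw [Matrix.mulVec, dotProduct, Finset.sum_eq_single x
      (fun y _ hy => by rw [hδ x y (Ne.symm hy), zero_mul]) (by simp)]
  rw [fid, ip, hmulVec, Complex.re_sum]
  refine Finset.sum_congr rfl fun x _ => ?_
  rw [mul_left_comm, ← Complex.normSq_eq_conj_mul_self, Complex.re_mul_ofReal,
    Complex.normSq_eq_norm_sq]

variable [DecidableEq α]

lemma IsIncoherent.fid_le {δ : Matrix α α ℂ} (hδ : IsIncoherent δ) {ψ : α → ℂ} {M : ℝ}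
    (hM : ∀ x, ‖ψ x‖ ^ 2 ≤ M) : fid ψ δ ≤ M := by
  obtain ⟨⟨hpsd, htrace⟩, hoff⟩ := hδ
  have hdiag : ∀ x, 0 ≤ (δ x x).re := fun x => (Complex.le_def.mp hpsd.diag_nonneg).1
  have hdiag_sum : ∑ x, (δ x x).re = 1 := by
    simpa [Matrix.trace, Complex.re_sum] using congrArg Complex.re htrace
  calc fid ψ δ = ∑ x, (δ x x).re * ‖ψ x‖ ^ 2 := fid_eq_sum_of_offDiag_eq_zero hoff ψ
    _ ≤ ∑ x, (δ x x).re * M :=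
      Finset.sum_le_sum fun x _ => mul_le_mul_of_nonneg_left (hM x) (hdiag x)
    _ = M := by rw [← Finset.sum_mul, hdiag_sum, one_mul]

lemma projV_eq_diagonal (a : α) : projV a = Matrix.diagonal (Pi.single a 1) := by
  ext x y
  rw [projV, Matrix.of_apply, Matrix.diagonal_apply, Pi.single_apply]
  grind

lemma isIncoherent_projV (a : α) : IsIncoherent (projV a) := by
  rw [projV_eq_diagonal]
  refine ⟨⟨Matrix.PosSemidef.diagonal ?_, by simp [Matrix.trace]⟩,
    fun x y hxy => Matrix.diagonal_apply_ne _ hxy⟩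
  intro x
  by_cases hx : x = a <;> simp [hx]

lemma fid_projV (ψ : α → ℂ) (a : α) : fid ψ (projV a) = ‖ψ a‖ ^ 2 := by
  rw [fid_eq_sum_of_offDiag_eq_zero (isIncoherent_projV a).2, Finset.sum_eq_single a]
  · simp [projV]
  · intro x _ hx; simp [projV, hx]
  · simp

lemma Cf_eq_sqrt_of_forall_le {ψ : α → ℂ} {a : α} (ha : ∀ x, ‖ψ x‖ ^ 2 ≤ ‖ψ a‖ ^ 2) :
    Cf ψ = √(1 - ‖ψ a‖ ^ 2) := by
  refine IsLeast.csInf_eq ⟨⟨projV a, isIncoherent_projV a, by rw [fid_projV]⟩, ?_⟩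
  rintro r ⟨δ, hδ, rfl⟩
  exact Real.sqrt_le_sqrt (by linarith [hδ.fid_le ha])

lemma sSup_norm_sq_eq_one_sub_Cf_sq [Nonempty α] {ψ : α → ℂ} (hψ : normSq ψ = 1) :
    sSup {r : ℝ | ∃ i, r = ‖ψ i‖ ^ 2} = 1 - Cf ψ ^ 2 := by
  obtain ⟨a, -, ha⟩ := Finset.exists_max_image Finset.univ (fun i => ‖ψ i‖ ^ 2) Finset.univ_nonempty
  have ha_le_one : ‖ψ a‖ ^ 2 ≤ 1 :=
    hψ ▸ Finset.single_le_sum (f := fun i => ‖ψ i‖ ^ 2) (fun i _ => sq_nonneg _) (Finset.mem_univ a)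
  rw [Cf_eq_sqrt_of_forall_le (fun x => ha x (Finset.mem_univ x)), Real.sq_sqrt (by linarith),
    sub_sub_cancel]
  exact IsGreatest.csSup_eq ⟨⟨a, rfl⟩, by rintro _ ⟨i, rfl⟩; exact ha i (Finset.mem_univ i)⟩

end Coherence

section PauliLayer

variable {n : ℕ}

lemma kronN_mulVec_apply_of_row_support {V : Fin n → Matrix Bool Bool ℂ} {x c : BV n}
    (hV : ∀ j, V j (x j) (!c j) = 0) (ψ : BV n → ℂ) :
    (kronN V).mulVec ψ x = (∏ j, V j (x j) (c j)) * ψ c := by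
  rw [Matrix.mulVec, dotProduct, Finset.sum_eq_single c _ (by simp)]
  · rfl
  intro y _ hy
  obtain ⟨j, hj⟩ := Function.ne_iff.mp hy
  rw [show kronN V x y = ∏ k, V k (x k) (y k) from rfl,
    Finset.prod_eq_zero (Finset.mem_univ j) (by rw [Bool.eq_not.mpr hj, hV j]), zero_mul]

lemma norm_ip_zeroVec_kronN_mulVec {V : Fin n → Matrix Bool Bool ℂ} {c : BV n}
    (hone : ∀ j, ‖V j false (c j)‖ = 1) (hzero : ∀ j, V j false (!c j) = 0) (ψ : BV n → ℂ) :
    ‖ip (zeroVec n) ((kronN V).mulVec ψ)‖ = ‖ψ c‖ := by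
  rw [zeroVec, ip_basisVec_left, kronN_mulVec_apply_of_row_support hzero, norm_mul, norm_prod,
    Finset.prod_eq_one fun j _ => hone j, one_mul]

lemma IsPauliXYZ.exists_row_false {V : Matrix Bool Bool ℂ} (hV : IsPauliXYZ V) :
    ∃ c, ‖V false c‖ = 1 ∧ V false (!c) = 0 := by
  rcases hV with rfl | rfl | rfl
  · exact ⟨true, by simp [PX]⟩
  · exact ⟨true, by simp [PY]⟩
  · exact ⟨false, by simp [PZ]⟩

lemma isPauliXYZ_ite (b : Bool) : IsPauliXYZ (if b then PX else PZ) := by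
  cases b <;> simp [IsPauliXYZ]

lemma norm_ite_apply_false (b : Bool) : ‖(if b then PX else PZ) false b‖ = 1 := by
  cases b <;> simp [PX, PZ]

lemma ite_apply_false_not (b : Bool) : (if b then PX else PZ) false (!b) = 0 := by
  cases b <;> simp [PX, PZ]

lemma pauliLayer_overlaps_eq (ψ : BV n → ℂ) :
    {r : ℝ | ∃ V : Fin n → Matrix Bool Bool ℂ, (∀ j, IsPauliXYZ (V j)) ∧
        r = ‖ip (zeroVec n) ((kronN V).mulVec ψ)‖ ^ 2} = {r : ℝ | ∃ i, r = ‖ψ i‖ ^ 2} := by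
  ext r
  constructor
  · rintro ⟨V, hV, rfl⟩
    choose c hone hzero using fun j => (hV j).exists_row_false
    exact ⟨c, by rw [norm_ip_zeroVec_kronN_mulVec hone hzero]⟩
  · rintro ⟨i, rfl⟩
    exact ⟨fun j => if i j then PX else PZ, fun j => isPauliXYZ_ite (i j), by
      rw [norm_ip_zeroVec_kronN_mulVec (fun j => norm_ite_apply_false (i j))
        (fun j => ite_apply_false_not (i j))]⟩

end PauliLayer

/-- Maximizing `|⟨0ⁿ|(V₁⊗⋯⊗Vₙ)|ψ⟩|²` over Pauli layers from `{X,Y,Z}` equals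
the maximal squared overlap with computational basis states, which equals
`1 − C_f(ψ)²`. -/
theorem pauli_layer_max_coherence :
    ∀ n : ℕ, 1 ≤ n → ∀ ψ : BV n → ℂ, normSq ψ = 1 →
      sSup {r : ℝ | ∃ V : Fin n → Matrix Bool Bool ℂ, (∀ j, IsPauliXYZ (V j)) ∧
          r = norm (ip (zeroVec n) ((kronN V).mulVec ψ)) ^ 2}
        = sSup {r : ℝ | ∃ i : BV n, r = norm (ψ i) ^ 2} ∧
      sSup {r : ℝ | ∃ i : BV n, r = norm (ψ i) ^ 2} = 1 - Cf ψ ^ 2 :=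
  fun _ _ ψ hψ => ⟨by rw [pauliLayer_overlaps_eq], sSup_norm_sq_eq_one_sub_Cf_sq hψ⟩

end

end SKW
end
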